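/- arXiv:1602.01303 — 3 statements merged into one kernel-verified Lean document; each statement's English description precedes it below -/
import Mathlib

section
/- For nonzero polynomials P and Q over a complete discrete valuation field K, the Newton polygon of the product PQ equals the Minkowski sum of the Newton polygons of P and Q; equivalently, NF(PQ)(x) = inf over x₁ + x₂ = x of NF(P)(x₁) + NF(Q)(x₂) (the infimal convolution of NF(P) and NF(Q)). -/
open Polynomial Set

noncomputable section

variable {K : Type*} [Field K]

/-- Map `WithTop ℤ` into `EReal`. -/
def toE : WithTop ℤ → EReal := WithTop.recTopCoe ⊤ (fun n => ((n : ℝ) : EReal))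

/-- Newton function of a polynomial: the largest convex function lying below the
points `(i, val aᵢ)`, realized as the sup of affine minorants. -/
def NF (v : AddValuation K (WithTop ℤ)) (P : K[X]) (x : ℝ) : EReal :=
  sSup {y : EReal | ∃ a b : ℝ,
    (∀ i : ℕ, i ≤ P.natDegree → ((a * (i : ℝ) + b : ℝ) : EReal) ≤ toE (v (P.coeff i))) ∧
    y = ((a * x + b : ℝ) : EReal)}

/-- The invariant `b_φ(Q) = min_{0 ≤ x ≤ deg Q} (NF(Q)(x) − φ(x))`. -/
def bE (v : AddValuation K (WithTop ℤ)) (φ : ℝ → EReal) (Q : K[X]) : EReal :=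
  sInf {y : EReal | ∃ x : ℝ, 0 ≤ x ∧ x ≤ (Q.natDegree : ℝ) ∧ y = NF v Q x - φ x}

/-
`NF P` is the transform `x ↦ sup_a (a x + g_P a)` of `g_P a = min_i (val aᵢ - a i)`, and Gauss's
lemma `g_{PQ} = g_P + g_Q` (the largest minimizing indices of `P` and `Q` give a term of a
coefficient of `PQ` that nothing cancels) yields `NF(PQ)(x₁ + x₂) ≤ NF(P)(x₁) + NF(Q)(x₂)`.
Conversely, left of the trailing degree of `PQ` its Newton function is `⊤`; otherwise the
connectedness of `ℝ` gives a slope `a` whose supporting lines touch `P` at `i, i'` and `Q` at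
`j, j'` with `i + j ≤ x ≤ i' + j'`. Splitting `x = x₁ + x₂` along these two segments, both Newton
functions are affine of slope `a` there, and their sum is an affine minorant of `NF(PQ)` at `x`.
-/

namespace NewtonPolygon

open Finset Filter

def IsLowerSupport (S : Finset ℕ) (p : ℕ → ℝ) (a : ℝ) (i : ℕ) : Prop :=
  ∀ j ∈ S, p i - a * i ≤ p j - a * j

def newtonFn (S : Finset ℕ) (p : ℕ → ℝ) (x : ℝ) : EReal :=
  sSup {y : EReal | ∃ a b : ℝ, (∀ i ∈ S, a * i + b ≤ p i) ∧ y = ((a * x + b : ℝ) : EReal)}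

variable {S T : Finset ℕ} {p q : ℕ → ℝ} {a x : ℝ} {i i' : ℕ}

lemma isClosed_setOf_isLowerSupport (S : Finset ℕ) (p : ℕ → ℝ) (i : ℕ) :
    IsClosed {a : ℝ | IsLowerSupport S p a i} := by
  simp only [IsLowerSupport, ofPred_forall]
  exact isClosed_iInter fun j => isClosed_iInter fun _ => isClosed_le (by fun_prop) (by fun_prop)

lemma exists_isLowerSupport_forall_lt (hS : S.Nonempty) (p : ℕ → ℝ) (a : ℝ) :
    ∃ i ∈ S, IsLowerSupport S p a i ∧ ∀ j ∈ S, i < j → p i - a * i < p j - a * j := by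
  classical
  set M := S.filter (IsLowerSupport S p a)
  obtain ⟨i₀, hi₀, hmin⟩ := S.exists_min_image (fun j => p j - a * j) hS
  have hM : M.Nonempty := ⟨i₀, mem_filter.2 ⟨hi₀, hmin⟩⟩
  obtain ⟨hiS, hi⟩ := mem_filter.1 (M.max'_mem hM)
  refine ⟨_, hiS, hi, fun j hj hlt => (hi j hj).lt_of_ne fun heq => ?_⟩
  have hjM : j ∈ M := mem_filter.2 ⟨hj, fun k hk => heq ▸ hi k hk⟩
  exact (M.le_max' j hjM).not_gt hlt

lemma eventually_atBot_isLowerSupport (hi : ∀ j ∈ S, i ≤ j) :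
    ∀ᶠ a in atBot, IsLowerSupport S p a i := by
  refine (eventually_all_finset S).2 fun j hj => ?_
  rcases (hi j hj).eq_or_lt with rfl | hlt
  · exact .of_forall fun _ => le_rfl
  have hji : (i : ℝ) + 1 ≤ j := by exact_mod_cast hlt
  filter_upwards [eventually_le_atBot (min 0 (p j - p i))] with a ha
  nlinarith [min_le_left 0 (p j - p i), min_le_right 0 (p j - p i)]

lemma eventually_atTop_isLowerSupport (hi : ∀ j ∈ S, j ≤ i) :
    ∀ᶠ a in atTop, IsLowerSupport S p a i := by
  refine (eventually_all_finset S).2 fun j hj => ?_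
  rcases (hi j hj).eq_or_lt with rfl | hlt
  · exact .of_forall fun _ => le_rfl
  have hji : (j : ℝ) + 1 ≤ i := by exact_mod_cast hlt
  filter_upwards [eventually_ge_atTop (max 0 (p i - p j))] with a ha
  nlinarith [le_max_left 0 (p i - p j), le_max_right 0 (p i - p j)]

lemma isClosed_setOf_exists_isLowerSupport (C : ℕ → ℕ → Prop) :
    IsClosed {a : ℝ | ∃ i ∈ S, ∃ j ∈ T,
      IsLowerSupport S p a i ∧ IsLowerSupport T q a j ∧ C i j} := by
  have : {a : ℝ | ∃ i ∈ S, ∃ j ∈ T, IsLowerSupport S p a i ∧ IsLowerSupport T q a j ∧ C i j} =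
      ⋃ i ∈ S, ⋃ j ∈ T, {a | IsLowerSupport S p a i} ∩ {a | IsLowerSupport T q a j} ∩
        {_a | C i j} := by
    ext a; simp only [mem_iUnion, mem_inter_iff, mem_ofPred_eq, exists_prop, and_assoc]
  rw [this]
  exact isClosed_biUnion_finset fun i _ => isClosed_biUnion_finset fun j _ =>
    ((isClosed_setOf_isLowerSupport S p i).inter (isClosed_setOf_isLowerSupport T q j)).inter
      isClosed_const

/-- The sets of slopes where some supporting indices satisfy `i + j ≤ x`, resp. `x ≤ i + j`,
are closed and cover `ℝ`, so by connectedness they meet. -/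
lemma exists_isLowerSupport_add_le_le_add (hS : S.Nonempty) (hT : T.Nonempty)
    (hlo : (S.min' hS : ℝ) + T.min' hT ≤ x) (hhi : x ≤ (S.max' hS : ℝ) + T.max' hT) :
    ∃ a : ℝ, ∃ i ∈ S, ∃ i' ∈ S, ∃ j ∈ T, ∃ j' ∈ T,
      IsLowerSupport S p a i ∧ IsLowerSupport S p a i' ∧
      IsLowerSupport T q a j ∧ IsLowerSupport T q a j' ∧ (i + j : ℝ) ≤ x ∧ x ≤ i' + j' := by
  obtain ⟨a, -, ⟨i, hi, j, hj, hai, haj, hle⟩, ⟨i', hi', j', hj', hai', haj', hge⟩⟩ :=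
    isPreconnected_closed_iff.1 isPreconnected_univ _ _
      (isClosed_setOf_exists_isLowerSupport (S := S) (T := T) (p := p) (q := q)
        fun i j => (i + j : ℝ) ≤ x)
      (isClosed_setOf_exists_isLowerSupport fun i j => x ≤ (i + j : ℝ))
      (fun a _ => by
        obtain ⟨i, hi, hai⟩ := S.exists_min_image (fun j => p j - a * j) hS
        obtain ⟨j, hj, haj⟩ := T.exists_min_image (fun k => q k - a * k) hT
        rcases le_total ((i + j : ℝ)) x with h | h
        exacts [.inl ⟨i, hi, j, hj, hai, haj, h⟩, .inr ⟨i, hi, j, hj, hai, haj, h⟩])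
      (by
        obtain ⟨a, hai, haj⟩ :=
          ((eventually_atBot_isLowerSupport (i := S.min' hS) fun j hj => S.min'_le j hj).and
            (eventually_atBot_isLowerSupport (i := T.min' hT) fun j hj => T.min'_le j hj)).exists
        exact ⟨a, trivial, _, S.min'_mem hS, _, T.min'_mem hT, hai, haj, hlo⟩)
      (by
        obtain ⟨a, hai, haj⟩ :=
          ((eventually_atTop_isLowerSupport (i := S.max' hS) fun j hj => S.le_max' j hj).and
            (eventually_atTop_isLowerSupport (i := T.max' hT) fun j hj => T.le_max' j hj)).exists
        exact ⟨a, trivial, _, S.max'_mem hS, _, T.max'_mem hT, hai, haj, hhi⟩)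
  exact ⟨a, i, hi, i', hi', j, hj, j', hj', hai, hai', haj, haj', hle, hge⟩

lemma exists_mem_segment_add_eq {u u' w w' : ℝ} (hlo : u + w ≤ x) (hhi : x ≤ u' + w') :
    ∃ x₁ ∈ segment ℝ u u', ∃ x₂ ∈ segment ℝ w w', x₁ + x₂ = x := by
  obtain ⟨s, t, hs, ht, hst, hx⟩ := Icc_subset_segment (𝕜 := ℝ) ⟨hlo, hhi⟩
  refine ⟨s * u + t * u', ⟨s, t, hs, ht, hst, rfl⟩, s * w + t * w', ⟨s, t, hs, ht, hst, rfl⟩, ?_⟩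
  rw [← hx, smul_eq_mul, smul_eq_mul]
  ring

lemma coe_le_newtonFn {b : ℝ} (h : ∀ i ∈ S, a * i + b ≤ p i) (x : ℝ) :
    ((a * x + b : ℝ) : EReal) ≤ newtonFn S p x :=
  le_sSup ⟨a, b, h, rfl⟩

lemma IsLowerSupport.coe_le_newtonFn (h : IsLowerSupport S p a i) (x : ℝ) :
    ((a * x + (p i - a * i) : ℝ) : EReal) ≤ newtonFn S p x :=
  NewtonPolygon.coe_le_newtonFn (fun j hj => by linarith [h j hj]) x

lemma newtonFn_le_of_mem_segment (hi : i ∈ S) (hi' : i' ∈ S) (h : IsLowerSupport S p a i)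
    (h' : IsLowerSupport S p a i') (hx : x ∈ segment ℝ (i : ℝ) i') :
    newtonFn S p x ≤ ((a * x + (p i - a * i) : ℝ) : EReal) := by
  refine sSup_le ?_
  rintro _ ⟨a', b', hab, rfl⟩
  obtain ⟨s, t, hs, ht, hst, rfl⟩ := hx
  obtain rfl : s = 1 - t := by linarith
  have heq : p i' - a * i' = p i - a * i := le_antisymm (h' i hi) (h i' hi')
  rw [EReal.coe_le_coe_iff, smul_eq_mul, smul_eq_mul]
  nlinarith [mul_le_mul_of_nonneg_left (hab i hi) hs, mul_le_mul_of_nonneg_left (hab i' hi') ht,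
    congrArg (t * ·) heq]

lemma newtonFn_eq_top_of_lt_min' (hS : S.Nonempty) (hx : x < S.min' hS) :
    newtonFn S p x = ⊤ := by
  refine EReal.eq_top_iff_forall_lt _ |>.2 fun c => ?_
  set m := S.min' hS
  have hxm : x - m < 0 := by linarith
  obtain ⟨a, ham, ha⟩ :=
    ((eventually_atBot_isLowerSupport (p := p) (i := m) fun j hj => S.min'_le j hj).and
      (eventually_lt_atBot ((c - p m) / (x - m)))).exists
  refine lt_of_lt_of_le ?_ (ham.coe_le_newtonFn x)
  rw [EReal.coe_lt_coe_iff]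
  nlinarith [(lt_div_iff_of_neg hxm).1 ha]

end NewtonPolygon

open NewtonPolygon Finset

lemma segment_subset_Icc_natDegree {R : Type*} [Semiring R] {P : R[X]} {i i' : ℕ}
    (hi : i ∈ P.support) (hi' : i' ∈ P.support) :
    segment ℝ (i : ℝ) i' ⊆ Icc 0 (P.natDegree : ℝ) :=
  (convex_Icc _ _).segment_subset
    ⟨Nat.cast_nonneg _, Nat.cast_le.2 (le_natDegree_of_mem_supp _ hi)⟩
    ⟨Nat.cast_nonneg _, Nat.cast_le.2 (le_natDegree_of_mem_supp _ hi')⟩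

lemma exists_mem_antidiagonal_add_le_coeff_mul {R Γ₀ : Type*} [Ring R]
    [LinearOrderedAddCommMonoidWithTop Γ₀] (w : AddValuation R Γ₀) (P Q : R[X]) (k : ℕ) :
    ∃ ij ∈ antidiagonal k, w (P.coeff ij.1) + w (Q.coeff ij.2) ≤ w ((P * Q).coeff k) := by
  obtain ⟨ij, hij, hmin⟩ := (antidiagonal k).exists_min_image
    (fun ij => w (P.coeff ij.1 * Q.coeff ij.2)) ⟨(0, k), by simp⟩
  refine ⟨ij, hij, ?_⟩
  rw [← w.map_mul, coeff_mul]
  exact w.map_le_sum hmin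

section Valuation

variable (v : AddValuation K (WithTop ℤ)) {P Q : K[X]}

-- junk value `0` off the support
def coeffVal (P : K[X]) (i : ℕ) : ℤ := (v (P.coeff i)).untopD 0

lemma coe_coeffVal {i : ℕ} (h : P.coeff i ≠ 0) : (coeffVal v P i : WithTop ℤ) = v (P.coeff i) := by
  obtain ⟨z, hz⟩ := WithTop.ne_top_iff_exists.1 (v.ne_top_iff.2 h)
  rw [coeffVal, ← hz, WithTop.untopD_coe]

lemma NF_eq_newtonFn (P : K[X]) (x : ℝ) :
    NF v P x = newtonFn P.support (fun i => (coeffVal v P i : ℝ)) x := by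
  unfold NF newtonFn
  congr! 3 with y
  refine exists₂_congr fun a b => and_congr_left fun _ => ⟨fun h i hi => ?_, fun h i _ => ?_⟩
  · have := h i (le_natDegree_of_mem_supp i hi)
    rwa [← coe_coeffVal v (mem_support_iff.1 hi), toE, WithTop.recTopCoe_coe,
      EReal.coe_le_coe_iff] at this
  · by_cases hc : P.coeff i = 0
    · simp [hc, toE]
    · rw [← coe_coeffVal v hc, toE, WithTop.recTopCoe_coe, EReal.coe_le_coe_iff]
      exact h i (mem_support_iff.2 hc)

lemma add_le_coeffVal_mul {a b c : ℝ} (hb : ∀ i ∈ P.support, a * i + b ≤ coeffVal v P i)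
    (hc : ∀ j ∈ Q.support, a * j + c ≤ coeffVal v Q j) :
    ∀ k ∈ (P * Q).support, a * k + (b + c) ≤ coeffVal v (P * Q) k := by
  intro k hk
  obtain ⟨⟨i, j⟩, hij, hle⟩ := exists_mem_antidiagonal_add_le_coeff_mul v P Q k
  have hfin : v (P.coeff i) + v (Q.coeff j) ≠ ⊤ :=
    ne_top_of_le_ne_top (v.ne_top_iff.2 (mem_support_iff.1 hk)) hle
  have hPi : P.coeff i ≠ 0 := fun h => hfin (by simp [h])
  have hQj : Q.coeff j ≠ 0 := fun h => hfin (by simp [h])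
  rw [← coe_coeffVal v hPi, ← coe_coeffVal v hQj, ← coe_coeffVal v (mem_support_iff.1 hk),
    ← WithTop.coe_add, WithTop.coe_le_coe] at hle
  have hk : (k : ℝ) = i + j := by exact_mod_cast (HasAntidiagonal.mem_antidiagonal.1 hij).symm
  have hleR : (coeffVal v P i + coeffVal v Q j : ℝ) ≤ coeffVal v (P * Q) k := by exact_mod_cast hle
  rw [hk]
  linarith [hb i (mem_support_iff.2 hPi), hc j (mem_support_iff.2 hQj)]

/-- Gauss's lemma: taking the largest supporting index on each side, the corresponding product
is the unique term of minimal valuation in its coefficient of `P * Q`. -/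
lemma exists_isLowerSupport_coeffVal_mul (hP : P ≠ 0) (hQ : Q ≠ 0) (a : ℝ) :
    ∃ i j : ℕ, IsLowerSupport P.support (fun i => (coeffVal v P i : ℝ)) a i ∧
      IsLowerSupport Q.support (fun i => (coeffVal v Q i : ℝ)) a j ∧ i + j ∈ (P * Q).support ∧
      (coeffVal v (P * Q) (i + j) : ℝ) = coeffVal v P i + coeffVal v Q j := by
  obtain ⟨i, hi, hiP, hlt_i⟩ :=
    exists_isLowerSupport_forall_lt (nonempty_support_iff.2 hP) (fun i => (coeffVal v P i : ℝ)) a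
  obtain ⟨j, hj, hjQ, hlt_j⟩ :=
    exists_isLowerSupport_forall_lt (nonempty_support_iff.2 hQ) (fun i => (coeffVal v Q i : ℝ)) a
  have hPi := mem_support_iff.1 hi
  have hQj := mem_support_iff.1 hj
  have hdom : ∀ ij ∈ (antidiagonal (i + j)).erase (i, j),
      v (P.coeff i * Q.coeff j) < v (P.coeff ij.1 * Q.coeff ij.2) := by
    rintro ⟨i', j'⟩ hij'
    obtain ⟨hne, hsum⟩ := mem_erase.1 hij'
    replace hsum : i' + j' = i + j := HasAntidiagonal.mem_antidiagonal.1 hsum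
    by_cases hz : P.coeff i' * Q.coeff j' = 0
    · rw [hz, v.map_zero, lt_top_iff_ne_top, v.ne_top_iff]
      exact mul_ne_zero hPi hQj
    obtain ⟨hPi', hQj'⟩ := mul_ne_zero_iff.1 hz
    have hsumR : a * i' + a * j' = a * i + a * j := by
      rw [← mul_add, ← mul_add]; exact_mod_cast congrArg (fun n : ℕ => a * n) hsum
    have key : (coeffVal v P i + coeffVal v Q j : ℝ) < coeffVal v P i' + coeffVal v Q j' := by
      rcases lt_trichotomy i i' with h | rfl | h
      · linarith [hlt_i i' (mem_support_iff.2 hPi') h, hjQ j' (mem_support_iff.2 hQj')]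
      · exact absurd (by rw [show j' = j by omega]) hne
      · linarith [hlt_j j' (mem_support_iff.2 hQj') (by omega), hiP i' (mem_support_iff.2 hPi')]
    rw [v.map_mul, v.map_mul, ← coe_coeffVal v hPi, ← coe_coeffVal v hQj, ← coe_coeffVal v hPi',
      ← coe_coeffVal v hQj', ← WithTop.coe_add, ← WithTop.coe_add, WithTop.coe_lt_coe]
    exact_mod_cast key
  have hv : v ((P * Q).coeff (i + j)) = v (P.coeff i * Q.coeff j) := by
    rw [coeff_mul, ← add_sum_erase _ _
      (HasAntidiagonal.mem_antidiagonal.2 rfl : (i, j) ∈ antidiagonal (i + j))]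
    exact v.map_add_eq_of_lt_left (v.map_lt_sum (v.ne_top_iff.2 (mul_ne_zero hPi hQj)) hdom)
  have hk : (P * Q).coeff (i + j) ≠ 0 := by
    rw [← v.ne_top_iff, hv, v.ne_top_iff]; exact mul_ne_zero hPi hQj
  refine ⟨i, j, hiP, hjQ, mem_support_iff.2 hk, ?_⟩
  rw [v.map_mul, ← coe_coeffVal v hPi, ← coe_coeffVal v hQj, ← coe_coeffVal v hk,
    ← WithTop.coe_add, WithTop.coe_inj] at hv
  exact_mod_cast hv

lemma NF_mul_le_add (hP : P ≠ 0) (hQ : Q ≠ 0) (x₁ x₂ : ℝ) :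
    NF v (P * Q) (x₁ + x₂) ≤ NF v P x₁ + NF v Q x₂ := by
  rw [NF_eq_newtonFn, NF_eq_newtonFn, NF_eq_newtonFn]
  refine sSup_le ?_
  rintro _ ⟨a, b, hab, rfl⟩
  obtain ⟨i, j, hi, hj, hk, heq⟩ := exists_isLowerSupport_coeffVal_mul v hP hQ a
  have hb := hab _ hk
  push_cast at hb
  calc ((a * (x₁ + x₂) + b : ℝ) : EReal)
      ≤ ((a * x₁ + (coeffVal v P i - a * i) : ℝ) : EReal) +
          ((a * x₂ + (coeffVal v Q j - a * j) : ℝ) : EReal) := by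
        rw [← EReal.coe_add, EReal.coe_le_coe_iff]; linarith
    _ ≤ _ := add_le_add (hi.coe_le_newtonFn x₁) (hj.coe_le_newtonFn x₂)

lemma NF_eq_top_of_lt_natTrailingDegree (hP : P ≠ 0) {x : ℝ} (hx : x < P.natTrailingDegree) :
    NF v P x = ⊤ := by
  rw [NF_eq_newtonFn]
  exact newtonFn_eq_top_of_lt_min' _ (by rwa [← natTrailingDegree_eq_support_min' hP])

lemma exists_NF_add_le_NF_mul_of_natTrailingDegree_le (hP : P ≠ 0) (hQ : Q ≠ 0) {x : ℝ}
    (hlo : (P.natTrailingDegree : ℝ) + Q.natTrailingDegree ≤ x)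
    (hhi : x ≤ (P.natDegree : ℝ) + Q.natDegree) :
    ∃ x₁ x₂ : ℝ, 0 ≤ x₁ ∧ x₁ ≤ P.natDegree ∧ 0 ≤ x₂ ∧ x₂ ≤ Q.natDegree ∧ x₁ + x₂ = x ∧
      NF v P x₁ + NF v Q x₂ ≤ NF v (P * Q) x := by
  obtain ⟨a, i, hi, i', hi', j, hj, j', hj', hai, hai', haj, haj', hij, hij'⟩ :=
    exists_isLowerSupport_add_le_le_add (p := fun i => (coeffVal v P i : ℝ))
      (q := fun i => (coeffVal v Q i : ℝ)) (x := x) (nonempty_support_iff.2 hP)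
      (nonempty_support_iff.2 hQ)
      (by rwa [← natTrailingDegree_eq_support_min' hP, ← natTrailingDegree_eq_support_min' hQ])
      (by rwa [← natDegree_eq_support_max' hP, ← natDegree_eq_support_max' hQ])
  obtain ⟨x₁, hx₁, x₂, hx₂, rfl⟩ := exists_mem_segment_add_eq hij hij'
  obtain ⟨h₁, h₁'⟩ := segment_subset_Icc_natDegree hi hi' hx₁
  obtain ⟨h₂, h₂'⟩ := segment_subset_Icc_natDegree hj hj' hx₂
  refine ⟨x₁, x₂, h₁, h₁', h₂, h₂', rfl, ?_⟩
  rw [NF_eq_newtonFn, NF_eq_newtonFn, NF_eq_newtonFn]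
  calc _
      ≤ ((a * x₁ + (coeffVal v P i - a * i) : ℝ) : EReal) +
          ((a * x₂ + (coeffVal v Q j - a * j) : ℝ) : EReal) :=
        add_le_add (newtonFn_le_of_mem_segment hi hi' hai hai' hx₁)
          (newtonFn_le_of_mem_segment hj hj' haj haj' hx₂)
    _ = ((a * (x₁ + x₂) + ((coeffVal v P i - a * i) + (coeffVal v Q j - a * j)) : ℝ) : EReal) := by
        rw [← EReal.coe_add]; ring_nf
    _ ≤ _ := coe_le_newtonFn (add_le_coeffVal_mul v (fun k hk => by linarith [hai k hk])
        (fun k hk => by linarith [haj k hk])) _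

lemma exists_NF_add_le_NF_mul (hP : P ≠ 0) (hQ : Q ≠ 0) {x : ℝ} (hx₀ : 0 ≤ x)
    (hx : x ≤ (P * Q).natDegree) :
    ∃ x₁ x₂ : ℝ, 0 ≤ x₁ ∧ x₁ ≤ P.natDegree ∧ 0 ≤ x₂ ∧ x₂ ≤ Q.natDegree ∧ x₁ + x₂ = x ∧
      NF v P x₁ + NF v Q x₂ ≤ NF v (P * Q) x := by
  rw [natDegree_mul hP hQ, Nat.cast_add] at hx
  rcases le_or_gt ((P.natTrailingDegree : ℝ) + Q.natTrailingDegree) x with hlo | hlt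
  · exact exists_NF_add_le_NF_mul_of_natTrailingDegree_le v hP hQ hlo hx
  refine ⟨min x P.natDegree, x - min x P.natDegree, le_min hx₀ (Nat.cast_nonneg _),
    min_le_right _ _, by linarith [min_le_left x (P.natDegree : ℝ)], ?_, by ring, ?_⟩
  · rcases min_cases x (P.natDegree : ℝ) with ⟨h, -⟩ | ⟨h, -⟩ <;> rw [h] <;> linarith
  rw [NF_eq_top_of_lt_natTrailingDegree v (mul_ne_zero hP hQ)
    (by rwa [natTrailingDegree_mul hP hQ, Nat.cast_add])]
  exact le_top

end Valuation

/-- the Newton polygon of a product is the Minkowski sum of the Newton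
polygons: `NF(PQ)` is the infimal convolution of `NF(P)` and `NF(Q)`. -/
theorem stmt1 (v : AddValuation K (WithTop ℤ)) (P Q : K[X]) (hP : P ≠ 0) (hQ : Q ≠ 0)
    (x : ℝ) (hx : x ∈ Set.Icc (0 : ℝ) (((P * Q).natDegree : ℝ))) :
    NF v (P * Q) x =
      sInf {y : EReal | ∃ x₁ x₂ : ℝ, 0 ≤ x₁ ∧ x₁ ≤ (P.natDegree : ℝ) ∧
        0 ≤ x₂ ∧ x₂ ≤ (Q.natDegree : ℝ) ∧ x₁ + x₂ = x ∧
        y = NF v P x₁ + NF v Q x₂} := by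
  obtain ⟨hx₀, hx⟩ := hx
  refine le_antisymm (le_sInf ?_) ?_
  · rintro _ ⟨x₁, x₂, -, -, -, -, rfl, rfl⟩
    exact NF_mul_le_add v hP hQ x₁ x₂
  · obtain ⟨x₁, x₂, h₁, h₁', h₂, h₂', hsum, hle⟩ := exists_NF_add_le_NF_mul v hP hQ hx₀ hx
    refine (sInf_le ?_).trans hle
    exact ⟨x₁, x₂, h₁, h₁', h₂, h₂', hsum, rfl⟩
end
end

section
/- Let B be a monic polynomial of degree d over a complete discrete valuation field K, and let λ = NF(B)(d) − NF(B)(d−1) = −NF(B)(d−1) (the last slope of its Newton polygon). For each n ≥ d, let R_n = X^n mod B. Then for all x in [0, d−1], NF(R_n)(x) ≥ NF(B)(x) − λ(n − d). -/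
/-!
Write `Rₙ = Xⁿ mod B`, so that `Rₙ₊₁ = X Rₙ - (Rₙ)_{d-1} B`. If `a i + b` is an affine minorant
of the coefficient valuations of `B` with slope `a ≤ λ`, then `a i + b - λ (n - d)` is one for
`Rₙ`, by induction on `n`: multiplying by `X` costs `a ≤ λ`, and the statement for the last edge
`λ (i - d)` of the Newton polygon (a minorant by convexity, since `NF(B)(d - 1) = -λ`) bounds
`val (Rₙ)_{d-1} ≥ -λ (n + 1 - d)`. On `[0, d - 1]` a minorant of slope `> λ` lies below that
last edge, so the minorants of slope `≤ λ` already compute `NF(B)` there.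
-/

open Polynomial Set

noncomputable section

variable {K : Type*} [Field K]

section toE

@[simp] lemma toE_top : toE ⊤ = ⊤ := rfl

@[simp] lemma toE_coe (m : ℤ) : toE m = ((m : ℝ) : EReal) := rfl

@[simp] lemma toE_zero : toE 0 = 0 := by
  rw [← WithTop.coe_zero, toE_coe]
  simp

lemma toE_ne_bot (s : WithTop ℤ) : toE s ≠ ⊥ := by
  induction s using WithTop.recTopCoe <;> simp

lemma toE_mono : Monotone toE := by
  intro s t h
  induction t using WithTop.recTopCoe with
  | top => simp
  | coe m =>
    induction s using WithTop.recTopCoe with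
    | top => simp at h
    | coe k => simpa using WithTop.coe_le_coe.mp h

lemma toE_add (s t : WithTop ℤ) : toE (s + t) = toE s + toE t := by
  induction s using WithTop.recTopCoe with
  | top => simp [EReal.top_add_of_ne_bot (toE_ne_bot t)]
  | coe k =>
    induction t using WithTop.recTopCoe with
    | top => simp
    | coe m =>
      rw [← WithTop.coe_add, toE_coe, toE_coe, toE_coe]
      norm_cast

end toE

def IsAffineMinorant (v : AddValuation K (WithTop ℤ)) (P : K[X]) (a b : ℝ) : Prop :=
  ∀ i : ℕ, ((a * i + b : ℝ) : EReal) ≤ toE (v (P.coeff i))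

namespace IsAffineMinorant

variable {v : AddValuation K (WithTop ℤ)} {P Q : K[X]} {a b : ℝ}

lemma of_le_natDegree
    (h : ∀ i : ℕ, i ≤ P.natDegree → ((a * i + b : ℝ) : EReal) ≤ toE (v (P.coeff i))) :
    IsAffineMinorant v P a b := by
  intro i
  rcases le_or_gt i P.natDegree with hi | hi
  · exact h i hi
  · simp [coeff_eq_zero_of_natDegree_lt hi]

lemma mono {b' : ℝ} (h : IsAffineMinorant v P a b) (hb : b' ≤ b) : IsAffineMinorant v P a b' :=
  fun i => (EReal.coe_le_coe_iff.2 (by linarith)).trans (h i)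

lemma sub (hP : IsAffineMinorant v P a b) (hQ : IsAffineMinorant v Q a b) :
    IsAffineMinorant v (P - Q) a b := fun i => by
  rw [coeff_sub]
  exact (le_min (hP i) (hQ i)).trans (toE_mono.map_min ▸ toE_mono (v.map_sub _ _))

lemma X_mul (h : IsAffineMinorant v P a b) : IsAffineMinorant v (X * P) a (b - a) := by
  rintro (_ | i)
  · simp
  · rw [coeff_X_mul]
    convert h i using 2
    push_cast
    ring

lemma C_mul {c : K} {e : ℝ} (hc : (e : EReal) ≤ toE (v c)) (h : IsAffineMinorant v P a b) :
    IsAffineMinorant v (C c * P) a (e + b) := fun i => by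
  rw [coeff_C_mul, v.map_mul, toE_add, ← add_left_comm, EReal.coe_add]
  exact add_le_add hc (h i)

lemma X_pow_natDegree (hP : P.Monic) (h : IsAffineMinorant v P a b) :
    IsAffineMinorant v (X ^ P.natDegree) a b := fun i => by
  rw [coeff_X_pow]
  split_ifs with hi
  · simpa [hi, hP.coeff_natDegree] using h P.natDegree
  · simp

end IsAffineMinorant

section NewtonFunction

variable {v : AddValuation K (WithTop ℤ)} {P Q : K[X]}

lemma le_NF {a b : ℝ} (h : IsAffineMinorant v P a b) (x : ℝ) :
    ((a * x + b : ℝ) : EReal) ≤ NF v P x :=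
  le_sSup ⟨a, b, fun i _ => h i, rfl⟩

lemma NF_le {x : ℝ} {y : EReal}
    (h : ∀ a b, IsAffineMinorant v P a b → ((a * x + b : ℝ) : EReal) ≤ y) : NF v P x ≤ y :=
  sSup_le <| by
    rintro _ ⟨a, b, hab, rfl⟩
    exact h a b (.of_le_natDegree hab)

lemma NF_add_le_NF {x c : ℝ}
    (h : ∀ a b, IsAffineMinorant v P a b →
      ∃ a' b', IsAffineMinorant v Q a' b' ∧ a * x + b + c ≤ a' * x + b') :
    NF v P x + c ≤ NF v Q x := by
  rw [← EReal.le_sub_iff_add_le (.inl (EReal.coe_ne_bot c)) (.inl (EReal.coe_ne_top c))]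
  refine NF_le fun a b hab => ?_
  obtain ⟨a', b', hQ, hle⟩ := h a b hab
  rw [EReal.le_sub_iff_add_le (.inl (EReal.coe_ne_bot c)) (.inl (EReal.coe_ne_top c)),
    ← EReal.coe_add]
  exact (EReal.coe_le_coe_iff.2 hle).trans (le_NF hQ x)

end NewtonFunction

section ModByMonic

variable {B : K[X]}

lemma X_pow_natDegree_modByMonic (hB : B.Monic) : X ^ B.natDegree %ₘ B = X ^ B.natDegree - B := by
  rw [modByMonic_eq_of_dvd_sub hB (p₂ := X ^ B.natDegree - B) (by rw [sub_sub_cancel]),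
    modByMonic_eq_self_iff hB]
  have hdeg : (X ^ B.natDegree : K[X]).degree = B.degree := by
    rw [degree_X_pow, degree_eq_natDegree hB.ne_zero]
  exact hdeg ▸ degree_sub_lt_left hdeg (pow_ne_zero _ X_ne_zero) (by simp [hB.leadingCoeff])

lemma X_mul_modByMonic (hB : B.Monic) (hd : 0 < B.natDegree) {R : K[X]}
    (hR : R.degree < B.degree) :
    X * R %ₘ B = X * R - C (R.coeff (B.natDegree - 1)) * B := by
  rw [modByMonic_eq_of_dvd_sub hB (p₂ := X * R - C (R.coeff (B.natDegree - 1)) * B)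
    (by rw [sub_sub_cancel]; exact dvd_mul_left _ _),
    modByMonic_eq_self_iff hB, degree_eq_natDegree hB.ne_zero, degree_lt_iff_coeff_zero]
  intro m hm
  obtain ⟨j, rfl⟩ : ∃ j, m = j + 1 := ⟨m - 1, by omega⟩
  rw [coeff_sub, coeff_X_mul, coeff_C_mul]
  rcases hm.eq_or_lt with hj | hj
  · rw [← hj, hB.coeff_natDegree, show j = B.natDegree - 1 by omega, mul_one, sub_self]
  · rw [coeff_eq_zero_of_natDegree_lt hj, coeff_eq_zero_of_degree_lt, mul_zero, sub_zero]
    exact hR.trans_le (degree_le_natDegree.trans (by exact_mod_cast Nat.le_of_lt_succ hj))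

lemma X_pow_succ_modByMonic (hB : B.Monic) (hd : 0 < B.natDegree) (n : ℕ) :
    X ^ (n + 1) %ₘ B =
      X * (X ^ n %ₘ B) - C ((X ^ n %ₘ B).coeff (B.natDegree - 1)) * B := by
  rw [← X_mul_modByMonic hB hd (degree_modByMonic_lt _ hB), pow_succ', eq_comm]
  exact modByMonic_eq_of_dvd_sub hB (by rw [← mul_sub]; exact (dvd_modByMonic_sub _ _).mul_left _)

end ModByMonic

section Remainder

variable {v : AddValuation K (WithTop ℤ)} {B : K[X]} {lam : ℝ}

lemma IsAffineMinorant.natDegree_le {a b : ℝ} (hB : B.Monic) (h : IsAffineMinorant v B a b) :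
    a * B.natDegree + b ≤ 0 := by
  have := h B.natDegree
  rw [hB.coeff_natDegree, v.map_one, toE_zero] at this
  exact_mod_cast this

/-- Convexity: the segment from `(i, val Bᵢ)` to `(deg B, 0)` passes over `deg B - 1` at height
`val Bᵢ / (deg B - i)`, which therefore bounds `-λ` from above. -/
lemma isAffineMinorant_lastSlope (hB : B.Monic)
    (hlam : NF v B (B.natDegree - 1) = ((-lam : ℝ) : EReal)) :
    IsAffineMinorant v B lam (-(lam * B.natDegree)) := by
  refine .of_le_natDegree fun i hi => ?_
  rcases hi.eq_or_lt with rfl | hi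
  · simp [hB.coeff_natDegree]
  generalize hval : v (B.coeff i) = s
  induction s using WithTop.recTopCoe with
  | top => exact le_top
  | coe m =>
    have hdi1 : (1 : ℝ) ≤ B.natDegree - i := by
      rw [le_sub_iff_add_le']
      exact_mod_cast hi
    have hdi : (0 : ℝ) < B.natDegree - i := by linarith
    have key : NF v B (B.natDegree - 1) ≤ ((m / (B.natDegree - i) : ℝ) : EReal) := by
      refine NF_le fun a b hab => ?_
      have hi' : a * i + b ≤ m := by
        have := hab i
        rw [hval, toE_coe] at this
        exact_mod_cast this
      have hd' := hab.natDegree_le hB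
      rw [EReal.coe_le_coe_iff, le_div_iff₀ hdi]
      nlinarith [mul_nonpos_of_nonneg_of_nonpos (sub_nonneg.2 hdi1) hd']
    rw [hlam, EReal.coe_le_coe_iff, le_div_iff₀ hdi] at key
    rw [toE_coe, EReal.coe_le_coe_iff]
    linarith

lemma IsAffineMinorant.X_pow_modByMonic (hB : B.Monic) (hd : 0 < B.natDegree)
    (hlast : IsAffineMinorant v B lam (-(lam * B.natDegree)))
    {n : ℕ} (hn : B.natDegree ≤ n) {a b : ℝ} (ha : a ≤ lam) (hab : IsAffineMinorant v B a b) :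
    IsAffineMinorant v (X ^ n %ₘ B) a (b - lam * (n - B.natDegree)) := by
  induction n, hn using Nat.le_induction generalizing a b with
  | base =>
    rw [X_pow_natDegree_modByMonic hB, sub_self, mul_zero, sub_zero]
    exact (hab.X_pow_natDegree hB).sub hab
  | succ n hn ih =>
    rw [X_pow_succ_modByMonic hB hd]
    have hc := ih le_rfl hlast (B.natDegree - 1)
    rw [Nat.cast_pred hd] at hc
    refine ((ih ha hab).X_mul.mono ?_).sub ((hab.C_mul hc).mono ?_)
    · push_cast; nlinarith
    · push_cast; nlinarith

end Remainder

/-- for `B` monic of degree `d` with last slope `λ = −NF(B)(d−1)`,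
the remainder `Rₙ = Xⁿ mod B` satisfies `NF(Rₙ)(x) ≥ NF(B)(x) − λ(n−d)` on `[0,d−1]`. -/
theorem stmt2 (v : AddValuation K (WithTop ℤ)) (B : K[X]) (hB : B.Monic)
    (d : ℕ) (hd : B.natDegree = d)
    (lam : ℝ) (hlam : NF v B ((d : ℝ) - 1) = ((-lam : ℝ) : EReal))
    (n : ℕ) (hn : d ≤ n)
    (x : ℝ) (hx : x ∈ Set.Icc (0 : ℝ) ((d : ℝ) - 1)) :
    NF v B x + ((-(lam * ((n : ℝ) - (d : ℝ))) : ℝ) : EReal) ≤ NF v ((X ^ n) % B) x := by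
  subst hd
  obtain ⟨hx0, hx1⟩ := hx
  have hd : 0 < B.natDegree := by
    have : (0 : ℝ) < B.natDegree := by linarith
    exact_mod_cast this
  have hlast := isAffineMinorant_lastSlope hB hlam
  rw [← modByMonic_eq_mod _ hB]
  refine NF_add_le_NF fun a b hab => ?_
  rcases le_or_gt a lam with ha | ha
  · exact ⟨a, _, hlast.X_pow_modByMonic hB hd hn ha hab, by linarith⟩
  · have hpred := le_NF hab (B.natDegree - 1)
    rw [hlam, EReal.coe_le_coe_iff] at hpred
    refine ⟨lam, _, hlast.X_pow_modByMonic hB hd hn le_rfl hlast, ?_⟩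
    nlinarith [mul_le_mul_of_nonneg_right ha.le (sub_nonneg.2 hx1)]
end
end

section
/- Let P be a polynomial of degree n over a complete discrete valuation field K, and let d be the abscissa of an extremal point of NP(P). Suppose A and A' are both divisors of P of degree d with NF(A) = NF(A') = NF(P) restricted to [0,d], and with the same leading coefficient. Then A = A'. (Uniqueness of the slope factor.) -/
open Polynomial Set

noncomputable section

variable {K : Type*} [Field K]

/-! For a slope `a`, `w_a(Q) = min_i (v(qᵢ) - a * i)` is the valuation of `Q` with `v(X) = -a`;
it is additive on products, being `-log` of the Gauss norm of `Q` for `|x| = exp (-v x)`. Between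
the slopes `λ₀ < λ₁` on either side of the vertex `d`, the drop `w_λ₀ - w_λ₁` of a factor is
nonnegative and at most `(λ₁ - λ₀) * deg`. Reading the Newton function at `d - 1`, `d`, `d + 1`, the
drop of `P` is at most `(λ₁ - λ₀) * d` and the drops of `A` and `A'` are at least that. Write
`lcm A A' = A * C`, so that `A * C ∣ P` and `C ∣ A'`: the factor `C` of `P` has no drop, hence
`A' = C * B` has degree at most `deg B`, so `C` is a unit. Then `A' ∣ A`, and equal degrees and
leading coefficients give `A = A'`. -/

def expNeg : WithTop ℤ → ℝ := WithTop.recTopCoe 0 (fun n => Real.exp (-n))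

@[simp] lemma expNeg_top : expNeg ⊤ = 0 := rfl

@[simp] lemma expNeg_coe (n : ℤ) : expNeg n = Real.exp (-n) := rfl

lemma expNeg_add (x y : WithTop ℤ) : expNeg (x + y) = expNeg x * expNeg y := by
  induction x <;> induction y <;> simp [← WithTop.coe_add, ← Real.exp_add, add_comm]

lemma expNeg_nonneg (x : WithTop ℤ) : 0 ≤ expNeg x := by
  induction x <;> simp [Real.exp_nonneg]

lemma expNeg_antitone : Antitone expNeg := by
  intro x y hxy
  induction y with
  | top => simpa using expNeg_nonneg x
  | coe n =>
    lift x to ℤ using ne_top_of_le_ne_top WithTop.coe_ne_top hxy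
    simpa using WithTop.coe_le_coe.1 hxy

section

variable (v : AddValuation K (WithTop ℤ))

lemma isNonarchimedean_expNeg_comp_val : IsNonarchimedean (fun x => expNeg (v x)) := fun x y => by
  rw [← expNeg_antitone.map_min]
  exact expNeg_antitone (v.map_add x y)

def vAbs : AbsoluteValue K ℝ where
  toFun x := expNeg (v x)
  map_mul' x y := by simp [expNeg_add]
  nonneg' x := expNeg_nonneg (v x)
  eq_zero' x := by
    constructor
    · intro h
      by_contra hx
      lift v x to ℤ using (v.ne_top_iff).2 hx with n
      exact (Real.exp_pos _).ne' h
    · rintro rfl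
      simp
  add_le' _ _ := (isNonarchimedean_expNeg_comp_val v).add_le (fun x => expNeg_nonneg (v x))

lemma isNonarchimedean_vAbs : IsNonarchimedean (vAbs v) := isNonarchimedean_expNeg_comp_val v

lemma toE_eq_neg_log_vAbs {x : K} (hx : x ≠ 0) :
    toE (v x) = ((-Real.log (vAbs v x) : ℝ) : EReal) := by
  change toE (v x) = ((-Real.log (expNeg (v x)) : ℝ) : EReal)
  lift v x to ℤ using (v.ne_top_iff).2 hx with n
  simp [toE]

/-- `NF v Q` is the supremum of the lines `a * x + b` with `IsNewtonMinorant v Q a b`. -/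
def IsNewtonMinorant (Q : K[X]) (a b : ℝ) : Prop :=
  ∀ i : ℕ, i ≤ Q.natDegree → ((a * (i : ℝ) + b : ℝ) : EReal) ≤ toE (v (Q.coeff i))

variable {v}

lemma IsNewtonMinorant.coe_le_NF {Q : K[X]} {a b : ℝ} (h : IsNewtonMinorant v Q a b) (x : ℝ) :
    ((a * x + b : ℝ) : EReal) ≤ NF v Q x :=
  le_sSup ⟨a, b, h, rfl⟩

lemma IsNewtonMinorant.of_le {Q : K[X]} {a b a' b' : ℝ} (h : IsNewtonMinorant v Q a b)
    (hle : ∀ i : ℕ, i ≤ Q.natDegree → a' * i + b' ≤ a * i + b) : IsNewtonMinorant v Q a' b' :=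
  fun i hi => (EReal.coe_le_coe_iff.2 (hle i hi)).trans (h i hi)

lemma NF_natCast_le {Q : K[X]} {i : ℕ} (hi : i ≤ Q.natDegree) :
    NF v Q i ≤ toE (v (Q.coeff i)) :=
  sSup_le fun _ ⟨_, _, h, hy⟩ => hy ▸ h i hi

lemma isNewtonMinorant_of_le_NF {Q : K[X]} {a b : ℝ}
    (h : ∀ i : ℕ, i ≤ Q.natDegree → ((a * (i : ℝ) + b : ℝ) : EReal) ≤ NF v Q i) :
    IsNewtonMinorant v Q a b :=
  fun i hi => (h i hi).trans (NF_natCast_le hi)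

lemma le_NF_extrapolate {Q : K[X]} {x h s c e : ℝ} (hs : 1 ≤ s) (hx : NF v Q x ≤ c)
    (he : (e : EReal) ≤ NF v Q (x + h)) :
    ((c + s * (e - c) : ℝ) : EReal) ≤ NF v Q (x + s * h) := by
  refine EReal.ge_of_forall_gt_iff_ge.1 fun t ht => ?_
  rw [EReal.coe_lt_coe_iff] at ht
  have hs0 : 0 < s := by linarith
  obtain ⟨u, rfl⟩ : ∃ u, t = c + s * u := ⟨(t - c) / s, by field_simp; ring⟩
  have hu : u < e - c := lt_of_mul_lt_mul_left (by linarith) hs0.le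
  obtain ⟨_, ⟨a, b, hab, rfl⟩, hlt⟩ :=
    lt_sSup_iff.1 (lt_of_lt_of_le (EReal.coe_lt_coe_iff.2 (by linarith : c + u < e)) he)
  replace hab : IsNewtonMinorant v Q a b := hab
  rw [EReal.coe_lt_coe_iff] at hlt
  have hxc : a * x + b ≤ c := EReal.coe_le_coe_iff.1 ((hab.coe_le_NF x).trans hx)
  refine le_trans (EReal.coe_le_coe_iff.2 ?_) (hab.coe_le_NF (x + s * h))
  -- the line takes the value `(1 - s) * (a * x + b) + s * (a * (x + h) + b)` at `x + s * h`
  nlinarith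

lemma le_NF_of_le_vertex {Q : K[X]} {d i : ℕ} {c lam : ℝ} (hd : NF v Q d = c)
    (hleft : NF v Q ((d : ℝ) - 1) = ((c - lam : ℝ) : EReal)) (hi : i ≤ d) :
    ((c + lam * ((i : ℝ) - d) : ℝ) : EReal) ≤ NF v Q i := by
  rcases hi.eq_or_lt with rfl | hi
  · simp [hd]
  have hs : (1 : ℝ) ≤ d - i := by
    have : (i : ℝ) + 1 ≤ d := by exact_mod_cast hi
    linarith
  have h := le_NF_extrapolate (h := -1) (e := c - lam) hs hd.le
    (by rw [← sub_eq_add_neg]; exact hleft.ge)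
  convert h using 2 <;> ring

lemma le_NF_of_vertex_le {Q : K[X]} {d i : ℕ} {c lam : ℝ} (hd : NF v Q d = c)
    (hright : NF v Q ((d : ℝ) + 1) = ((c + lam : ℝ) : EReal)) (hi : d ≤ i) :
    ((c + lam * ((i : ℝ) - d) : ℝ) : EReal) ≤ NF v Q i := by
  rcases hi.eq_or_lt with rfl | hi
  · simp [hd]
  have hs : (1 : ℝ) ≤ i - d := by
    have : (d : ℝ) + 1 ≤ i := by exact_mod_cast hi
    linarith
  have h := le_NF_extrapolate hs hd.le hright.ge
  convert h using 2 <;> ring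

variable (v) in
/-- `min_i (v(qᵢ) - a * i)`, the valuation of `Q` for `v(X) = -a`; it is the largest intercept of
a Newton minorant of slope `a`. -/
def gaussVal (Q : K[X]) (a : ℝ) : ℝ :=
  -Real.log (Q.gaussNorm (vAbs v) (Real.exp a))

lemma gaussNorm_vAbs_ne_zero {Q : K[X]} (hQ : Q ≠ 0) (a : ℝ) :
    Q.gaussNorm (vAbs v) (Real.exp a) ≠ 0 := by
  rwa [Ne, gaussNorm_eq_zero_iff (h_eq_zero := fun x => (vAbs v).eq_zero.1) (hc := Real.exp_pos a)]

lemma neg_log_vAbs_mul_exp_pow {x : K} (hx : x ≠ 0) (a : ℝ) (i : ℕ) :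
    -Real.log (vAbs v x * Real.exp a ^ i) = -Real.log (vAbs v x) - a * i := by
  rw [Real.log_mul ((vAbs v).ne_zero hx) (by positivity), Real.log_pow, Real.log_exp]
  ring

lemma isNewtonMinorant_gaussVal (Q : K[X]) (a : ℝ) :
    IsNewtonMinorant v Q a (gaussVal v Q a) := by
  intro i _
  by_cases hi : Q.coeff i = 0
  · simp [hi, toE]
  rw [toE_eq_neg_log_vAbs v hi, EReal.coe_le_coe_iff, gaussVal]
  have hle := Real.log_le_log (by positivity [(vAbs v).pos hi])
    (Q.le_gaussNorm (vAbs v) (Real.exp_pos a).le i)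
  rw [← neg_le_neg_iff, neg_log_vAbs_mul_exp_pow hi] at hle
  linarith

lemma le_gaussVal {Q : K[X]} (hQ : Q ≠ 0) {a b : ℝ} (h : IsNewtonMinorant v Q a b) :
    b ≤ gaussVal v Q a := by
  obtain ⟨i, hi⟩ := Q.exists_eq_gaussNorm (vAbs v) (Real.exp a)
  have hci : Q.coeff i ≠ 0 := by
    rintro hc
    exact gaussNorm_vAbs_ne_zero hQ a (by simpa [hc] using hi)
  have hb := h i (le_natDegree_of_ne_zero hci)
  rw [toE_eq_neg_log_vAbs v hci, EReal.coe_le_coe_iff] at hb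
  rw [gaussVal, hi, neg_log_vAbs_mul_exp_pow hci]
  linarith

lemma gaussVal_mul {Q R : K[X]} (hQ : Q ≠ 0) (hR : R ≠ 0) (a : ℝ) :
    gaussVal v (Q * R) a = gaussVal v Q a + gaussVal v R a := by
  rw [gaussVal, gaussNorm_mul (isNonarchimedean_vAbs v) (Real.exp_pos a),
    Real.log_mul (gaussNorm_vAbs_ne_zero hQ a) (gaussNorm_vAbs_ne_zero hR a), neg_add]
  rfl

lemma gaussVal_antitone {Q : K[X]} (hQ : Q ≠ 0) : Antitone (gaussVal v Q) := fun a a' h =>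
  le_gaussVal hQ <| (isNewtonMinorant_gaussVal Q a').of_le fun i _ => by
    have : a * i ≤ a' * i := mul_le_mul_of_nonneg_right h i.cast_nonneg
    linarith

lemma gaussVal_sub_gaussVal_le {Q : K[X]} (hQ : Q ≠ 0) {a a' : ℝ} (h : a ≤ a') :
    gaussVal v Q a - gaussVal v Q a' ≤ (a' - a) * Q.natDegree := by
  have := le_gaussVal hQ <| (isNewtonMinorant_gaussVal Q a).of_le
    (a' := a') (b' := gaussVal v Q a - (a' - a) * Q.natDegree) fun i hi => by
      have : (a' - a) * i ≤ (a' - a) * Q.natDegree :=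
        mul_le_mul_of_nonneg_left (Nat.cast_le.2 hi) (sub_nonneg.2 h)
      linarith
  linarith

lemma gaussVal_le_of_NF_le {Q : K[X]} {x c : ℝ} (h : NF v Q x ≤ c) (a : ℝ) :
    gaussVal v Q a ≤ c - a * x := by
  have := EReal.coe_le_coe_iff.1 (((isNewtonMinorant_gaussVal Q a).coe_le_NF x).trans h)
  linarith

lemma gaussVal_sub_gaussVal_le_of_vertex {P : K[X]} (hP : P ≠ 0) {d : ℕ} {c lam0 lam1 : ℝ}
    (hlt : lam0 ≤ lam1) (hd : NF v P d = c)
    (hleft : NF v P ((d : ℝ) - 1) = ((c - lam0 : ℝ) : EReal))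
    (hright : NF v P ((d : ℝ) + 1) = ((c + lam1 : ℝ) : EReal)) :
    gaussVal v P lam0 - gaussVal v P lam1 ≤ (lam1 - lam0) * d := by
  have h0 := gaussVal_le_of_NF_le hd.le lam0
  have h1 : c - lam1 * d ≤ gaussVal v P lam1 := by
    refine le_gaussVal hP (isNewtonMinorant_of_le_NF fun i _ => ?_)
    rcases le_total i d with hi | hi
    · refine le_trans (EReal.coe_le_coe_iff.2 ?_) (le_NF_of_le_vertex hd hleft hi)
      have : lam1 * ((i : ℝ) - d) ≤ lam0 * ((i : ℝ) - d) :=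
        mul_le_mul_of_nonpos_right hlt (sub_nonpos.2 (Nat.cast_le.2 hi))
      linarith
    · exact le_trans (le_of_eq (by ring_nf)) (le_NF_of_vertex_le hd hright hi)
  linarith

lemma le_gaussVal_sub_gaussVal_of_NF_eqOn {P A : K[X]} (hA : A ≠ 0) {d : ℕ} {c lam0 : ℝ}
    (hdA : A.natDegree = d) (hd : NF v P d = c)
    (hleft : NF v P ((d : ℝ) - 1) = ((c - lam0 : ℝ) : EReal))
    (hNF : ∀ x ∈ Set.Icc (0 : ℝ) d, NF v A x = NF v P x) (lam1 : ℝ) :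
    (lam1 - lam0) * d ≤ gaussVal v A lam0 - gaussVal v A lam1 := by
  have h1 := gaussVal_le_of_NF_le ((hNF d ⟨d.cast_nonneg, le_rfl⟩).trans hd).le lam1
  have h0 : c - lam0 * d ≤ gaussVal v A lam0 := by
    refine le_gaussVal hA (isNewtonMinorant_of_le_NF fun i hi => ?_)
    rw [hdA] at hi
    rw [hNF i ⟨i.cast_nonneg, Nat.cast_le.2 hi⟩]
    exact le_trans (le_of_eq (by ring_nf)) (le_NF_of_le_vertex hd hleft hi)
  linarith

lemma natDegree_eq_zero_of_gaussVal_sub {P A A' C : K[X]} (hP : P ≠ 0) (hA' : A' ≠ 0)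
    {a0 a1 : ℝ} (hlt : a0 < a1) (hACP : A * C ∣ P) (hCA' : C ∣ A')
    (hPA : gaussVal v P a0 - gaussVal v P a1 ≤ gaussVal v A a0 - gaussVal v A a1)
    (hA'max : (a1 - a0) * A'.natDegree ≤ gaussVal v A' a0 - gaussVal v A' a1) :
    C.natDegree = 0 := by
  obtain ⟨M, rfl⟩ := hACP
  obtain ⟨B, rfl⟩ := hCA'
  obtain ⟨hAC, hM⟩ := mul_ne_zero_iff.1 hP
  obtain ⟨hA, hC⟩ := mul_ne_zero_iff.1 hAC
  have hB := right_ne_zero_of_mul hA'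
  simp only [gaussVal_mul hAC hM, gaussVal_mul hA hC, gaussVal_mul hC hB] at hPA hA'max
  have hM' := gaussVal_antitone (v := v) hM hlt.le
  have hB' := gaussVal_sub_gaussVal_le (v := v) hB hlt.le
  have hC' : (a1 - a0) * C.natDegree ≤ 0 := by
    rw [natDegree_mul hC hB, Nat.cast_add] at hA'max
    linarith
  exact_mod_cast le_antisymm
    ((mul_nonpos_iff_pos_imp_nonpos.1 hC').1 (sub_pos.2 hlt)) C.natDegree.cast_nonneg

end

theorem stmt8_general (v : AddValuation K (WithTop ℤ)) (P : K[X]) (hP : P ≠ 0)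
    (d : ℕ)
    (c lam0 lam1 : ℝ) (hlt : lam0 < lam1)
    (hd : NF v P (d : ℝ) = ((c : ℝ) : EReal))
    (hleft : NF v P ((d : ℝ) - 1) = ((c - lam0 : ℝ) : EReal))
    (hright : NF v P ((d : ℝ) + 1) = ((c + lam1 : ℝ) : EReal))
    (A A' : K[X]) (hA : A ∣ P) (hA' : A' ∣ P)
    (hdA : A.natDegree = d) (hdA' : A'.natDegree = d)
    (hNF : ∀ x ∈ Set.Icc (0 : ℝ) (d : ℝ), NF v A x = NF v P x)
    (hNF' : ∀ x ∈ Set.Icc (0 : ℝ) (d : ℝ), NF v A' x = NF v P x)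
    (hlead : A.leadingCoeff = A'.leadingCoeff) :
    A = A' := by
  classical
  have hA0 : A ≠ 0 := ne_zero_of_dvd_ne_zero hP hA
  have hA'0 : A' ≠ 0 := ne_zero_of_dvd_ne_zero hP hA'
  obtain ⟨C, hL⟩ := dvd_lcm_left A A'
  have hCA' : C ∣ A' := (mul_dvd_mul_iff_left hA0).1 (hL ▸ lcm_dvd_mul A A')
  have hC0 : C.natDegree = 0 := by
    refine natDegree_eq_zero_of_gaussVal_sub (v := v) hP hA'0 hlt (hL ▸ lcm_dvd hA hA') hCA' ?_ ?_
    · exact (gaussVal_sub_gaussVal_le_of_vertex hP hlt.le hd hleft hright).trans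
        (le_gaussVal_sub_gaussVal_of_NF_eqOn hA0 hdA hd hleft hNF lam1)
    · exact hdA' ▸ le_gaussVal_sub_gaussVal_of_NF_eqOn hA'0 hdA' hd hleft hNF' lam1
  have hCunit : IsUnit C := isUnit_iff_degree_eq_zero.2 <|
    (degree_eq_iff_natDegree_eq (ne_zero_of_dvd_ne_zero hA'0 hCA')).2 hC0
  have hA'A : A' ∣ A := (hCunit.dvd_mul_right).1 (hL ▸ dvd_lcm_right A A')
  exact (eq_of_dvd_of_natDegree_le_of_leadingCoeff hA'A (by omega) hlead.symm).symm

/-- uniqueness of the slope factor: two divisors of `P` of degree `d`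
(the abscissa of an extremal point of `NP(P)`) with Newton function `NF(P)|[0,d]`
and the same leading coefficient coincide. -/
theorem stmt8 (v : AddValuation K (WithTop ℤ)) (P : K[X]) (hP : P ≠ 0)
    (d : ℕ) (hdn : d ≤ P.natDegree)
    (c lam0 lam1 : ℝ) (hlt : lam0 < lam1)
    (hd : NF v P (d : ℝ) = ((c : ℝ) : EReal))
    (hleft : NF v P ((d : ℝ) - 1) = ((c - lam0 : ℝ) : EReal))
    (hright : NF v P ((d : ℝ) + 1) = ((c + lam1 : ℝ) : EReal))
    (A A' : K[X]) (hA : A ∣ P) (hA' : A' ∣ P)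
    (hdA : A.natDegree = d) (hdA' : A'.natDegree = d)
    (hNF : ∀ x ∈ Set.Icc (0 : ℝ) (d : ℝ), NF v A x = NF v P x)
    (hNF' : ∀ x ∈ Set.Icc (0 : ℝ) (d : ℝ), NF v A' x = NF v P x)
    (hlead : A.leadingCoeff = A'.leadingCoeff) :
    A = A' :=
  stmt8_general v P hP d c lam0 lam1 hlt hd hleft hright A A' hA hA' hdA hdA' hNF hNF' hlead
end
end
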